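/- arXiv:1212.2251 — 3 statements merged into one kernel-verified Lean document; each statement's English description precedes it below -/
import Mathlib

section
/- If a module function m is D-safe with respect to hidden attribute sets H1 and H2, then m is D-safe with respect to H1 ∪ H2. Here a module with input attribute set I and output attribute set O is D-safe with respect to a hidden set H if any two inputs that agree on all attributes of I \ H are mapped to outputs that agree on all attributes of O \ H. -/
/-- Two tuples defined on attribute set `B` are equivalent w.r.t. hidden set `H`
iff they agree on every attribute in `B \ H`. -/
def EquivOn {ι : Type*} (V : ι → Type*) (B H : Set ι)
    (x x' : (a : B) → V a.1) : Prop :=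
  ∀ a : B, (a : ι) ∉ H → x a = x' a

/-- A module `m` (from `I`-assignments to `O`-assignments) is downstream-safe
w.r.t. the hidden set `H`. -/
def DSafe {ι : Type*} (V : ι → Type*) (I O : Set ι)
    (m : ((a : I) → V a.1) → ((a : O) → V a.1)) (H : Set ι) : Prop :=
  ∀ x x', EquivOn V I H x x' → EquivOn V O H (m x) (m x')

/-!
Equivalence modulo `H1 ∪ H2` is the relational composite of equivalence modulo `H1` and
equivalence modulo `H2`: to pass from `x` to `x'`, first change the `H1`-attributes, then the
remaining `H2`-attributes. Applying `m` to both halves of this decomposition gives the theorem.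
-/

section EquivOn

variable {ι : Type*} {V : ι → Type*} {B : Set ι} {H₁ H₂ : Set ι}

theorem EquivOn.trans_union {x y z : (a : B) → V a.1}
    (hxy : EquivOn V B H₁ x y) (hyz : EquivOn V B H₂ y z) :
    EquivOn V B (H₁ ∪ H₂) x z := fun a ha =>
  (hxy a fun h => ha (Or.inl h)).trans (hyz a fun h => ha (Or.inr h))

open Classical in
theorem EquivOn.exists_mid_of_union {x z : (a : B) → V a.1}
    (hxz : EquivOn V B (H₁ ∪ H₂) x z) :
    ∃ y, EquivOn V B H₁ x y ∧ EquivOn V B H₂ y z := by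
  refine ⟨fun a => if (a : ι) ∈ H₁ then z a else x a, fun a ha => by simp [ha], fun a ha => ?_⟩
  by_cases ha₁ : (a : ι) ∈ H₁
  · simp [ha₁]
  · simpa [ha₁] using hxz a (by simp [ha₁, ha])

theorem equivOn_union :
    EquivOn V B (H₁ ∪ H₂) = Relation.Comp (EquivOn V B H₁) (EquivOn V B H₂) := by
  ext x z
  exact ⟨EquivOn.exists_mid_of_union, fun ⟨_, hxy, hyz⟩ => hxy.trans_union hyz⟩

end EquivOn

theorem dsafe_union_general {ι : Type*} (V : ι → Type*) (I O : Set ι)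
    (m : ((a : I) → V a.1) → ((a : O) → V a.1)) (H1 H2 : Set ι)
    (h1 : DSafe V I O m H1) (h2 : DSafe V I O m H2) :
    DSafe V I O m (H1 ∪ H2) := by
  intro x x' hxx'
  rw [equivOn_union] at hxx' ⊢
  obtain ⟨y, hxy, hyx'⟩ := hxx'
  exact ⟨m y, h1 x y hxy, h2 y x' hyx'⟩

/-- D-safety w.r.t. `H1` and `H2` implies D-safety w.r.t. `H1 ∪ H2`. -/
theorem dsafe_union {ι : Type*} (V : ι → Type*) (I O : Set ι)
    (hIfin : I.Finite) (hOfin : O.Finite) (hIO : Disjoint I O)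
    (m : ((a : I) → V a.1) → ((a : O) → V a.1)) (H1 H2 : Set ι)
    (h1 : DSafe V I O m H1) (h2 : DSafe V I O m H2) :
    DSafe V I O m (H1 ∪ H2) :=
  dsafe_union_general V I O m H1 H2 h1 h2
end

section
/- The composition of two UD-safe modules is UD-safe with respect to a common hidden set H. -/
def USafe {ι : Type*} (V : ι → Type*) (I O : Set ι)
    (m : ((a : I) → V a.1) → ((a : O) → V a.1)) (H : Set ι) : Prop :=
  ∀ x x', EquivOn V O H (m x) (m x') → EquivOn V I H x x'

def UDSafe {ι : Type*} (V : ι → Type*) (I O : Set ι)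
    (m : ((a : I) → V a.1) → ((a : O) → V a.1)) (H : Set ι) : Prop :=
  DSafe V I O m H ∧ USafe V I O m H

section

variable {ι : Type*} {V : ι → Type*} {I J O H : Set ι}
  {f : ((a : I) → V a.1) → ((a : J) → V a.1)} {g : ((a : J) → V a.1) → ((a : O) → V a.1)}

theorem DSafe.comp (hg : DSafe V J O g H) (hf : DSafe V I J f H) : DSafe V I O (g ∘ f) H :=
  fun x x' h => hg _ _ (hf x x' h)

theorem USafe.comp (hg : USafe V J O g H) (hf : USafe V I J f H) : USafe V I O (g ∘ f) H :=
  fun x x' h => hf x x' (hg _ _ h)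

theorem UDSafe.comp (hg : UDSafe V J O g H) (hf : UDSafe V I J f H) :
    UDSafe V I O (g ∘ f) H :=
  ⟨hg.1.comp hf.1, hg.2.comp hf.2⟩

end

theorem udsafe_comp_general {ι : Type*} (V : ι → Type*) (AX AY AZ : Set ι)
    (m1 : ((a : AX) → V a.1) → ((a : AY) → V a.1))
    (m2 : ((a : AY) → V a.1) → ((a : AZ) → V a.1)) (H : Set ι)
    (h1 : UDSafe V AX AY m1 H) (h2 : UDSafe V AY AZ m2 H) :
    UDSafe V AX AZ (m2 ∘ m1) H :=
  h2.comp h1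

/-- The composition of two UD-safe modules is UD-safe
w.r.t. a common hidden set `H`. -/
theorem udsafe_comp {ι : Type*} (V : ι → Type*) (AX AY AZ : Set ι)
    (hXY : Disjoint AX AY) (hYZ : Disjoint AY AZ) (hXZ : Disjoint AX AZ)
    (m1 : ((a : AX) → V a.1) → ((a : AY) → V a.1))
    (m2 : ((a : AY) → V a.1) → ((a : AZ) → V a.1)) (H : Set ι)
    (h1 : UDSafe V AX AY m1 H) (h2 : UDSafe V AY AZ m2 H) :
    UDSafe V AX AZ (m2 ∘ m1) H :=
  udsafe_comp_general V AX AY AZ m1 m2 H h1 h2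
end

section
/- If a constant module m1 precedes a private module m2 in a chain (m2's input equals m1's output) and all of m2's input attributes are hidden while m2's outputs are visible, then m2 is only 1-workflow-private: in every possible world of the chain relation that fixes the public constant module m1, the output of m2 on the (unique) realized input is determined. -/
theorem snd_snd_eq_of_visible_subset_graph {α β γ : Type*} {R' : Set (α × β × γ)} {f : α → γ}
    (h : {v | ∃ t ∈ R', v = (t.1, t.2.2)} ⊆ {v | ∃ a : α, v = (a, f a)})
    {t : α × β × γ} (ht : t ∈ R') : t.2.2 = f t.1 := by
  obtain ⟨a, ha⟩ := h ⟨t, ht, rfl⟩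
  obtain ⟨rfl, hc⟩ := Prod.mk.inj ha
  exact hc

theorem constant_predecessor_no_privacy_general {α β γ : Type*}
    (m1 : α → β) (b0 : β) (hconst : ∀ a, m1 a = b0)
    (m2 : β → γ)
    (R' : Set (α × β × γ))
    -- R' agrees with R = {(a, m1 a, m2 (m1 a))} on the visible A, C columns
    (hproj : {v | ∃ t ∈ R', v = (t.1, t.2.2)} =
             {v | ∃ a : α, v = (a, m2 (m1 a))}) :
    ∀ t ∈ R', t.2.2 = m2 b0 := by
  intro t ht
  rw [← hconst t.1]
  exact snd_snd_eq_of_visible_subset_graph hproj.subset ht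

/-- In a two-module chain where the public first module `m1` is a
constant function and all input attributes of the private module `m2` (the `B`
column) are hidden, the output of `m2` on the realized input is determined in
every possible world: `m2` is only 1-workflow-private.  Tuples of the chain
relation are represented as triples `(a, b, c)` of the `A`, `B`, `C` values. -/
theorem constant_predecessor_no_privacy {α β γ : Type*}
    (m1 : α → β) (b0 : β) (hconst : ∀ a, m1 a = b0)
    (m2 : β → γ)
    (R' : Set (α × β × γ))
    -- functional dependency A → B
    (hFD1 : ∀ t ∈ R', ∀ s ∈ R', t.1 = s.1 → t.2.1 = s.2.1)
    -- functional dependency B → C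
    (hFD2 : ∀ t ∈ R', ∀ s ∈ R', t.2.1 = s.2.1 → t.2.2 = s.2.2)
    -- the public module m1 computes the B column
    (hpub : ∀ t ∈ R', t.2.1 = m1 t.1)
    -- R' agrees with R = {(a, m1 a, m2 (m1 a))} on the visible A, C columns
    (hproj : {v | ∃ t ∈ R', v = (t.1, t.2.2)} =
             {v | ∃ a : α, v = (a, m2 (m1 a))}) :
    ∀ t ∈ R', t.2.2 = m2 b0 :=
  constant_predecessor_no_privacy_general m1 b0 hconst m2 R' hproj
end
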